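/- arXiv:2506.19670 — 4 statements merged into one kernel-verified Lean document; each statement's English description precedes it below -/
import Mathlib

section
/- For all real γ with 0 < γ and all integers k ≥ 3, the inequality k^(−γ) > k·(2^(−γ) − 1) + 2 − 2^(−γ) holds. -/
/-! The right-hand side is the secant line of `x ↦ x ^ (-γ)` through `(1, 1)` and
`(2, 2 ^ (-γ))`, evaluated at `k`. For `γ > 0` this function is strictly convex on `(0, ∞)`,
so beyond the chord, at `k > 2`, its graph lies strictly above that secant line. -/

open Set

theorem strictConvexOn_rpow_of_neg {p : ℝ} (hp : p < 0) :
    StrictConvexOn ℝ (Ioi 0) fun x : ℝ ↦ x ^ p := by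
  refine StrictMonoOn.strictConvexOn_of_deriv (convex_Ioi 0)
    (fun x hx ↦ (Real.continuousAt_rpow_const x p (.inl (ne_of_gt hx))).continuousWithinAt) ?_
  rw [interior_Ioi, Real.deriv_rpow_const']
  intro x hx y _ hxy
  have : y ^ (p - 1) < x ^ (p - 1) := Real.rpow_lt_rpow_of_neg hx hxy (by linarith)
  exact mul_lt_mul_of_neg_left this hp

theorem StrictConvexOn.add_mul_slope_lt {s : Set ℝ} {f : ℝ → ℝ}
    (hf : StrictConvexOn ℝ s f) {x y z : ℝ}
    (hx : x ∈ s) (hz : z ∈ s) (hxy : x < y) (hyz : y < z) :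
    f y + (z - y) * ((f y - f x) / (y - x)) < f z := by
  have hslope := hf.slope_strict_mono_adjacent hx hz hxy hyz
  rw [lt_div_iff₀ (sub_pos.mpr hyz)] at hslope
  linarith

theorem stmt_3 (γ : ℝ) (hγ : 0 < γ) (k : ℕ) (hk : 3 ≤ k) :
    (k : ℝ) ^ (-γ) > (k : ℝ) * ((2 : ℝ) ^ (-γ) - 1) + 2 - (2 : ℝ) ^ (-γ) := by
  have hk2 : (2 : ℝ) < k := by exact_mod_cast hk
  have hsecant := (strictConvexOn_rpow_of_neg (neg_neg_of_pos hγ)).add_mul_slope_lt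
    (x := 1) (y := 2) (z := k) (mem_Ioi.mpr one_pos) (mem_Ioi.mpr (by linarith)) one_lt_two hk2
  norm_num only [Real.one_rpow] at hsecant
  linarith
end

section
/- (Variant of Farkas' Lemma.) For a matrix A ∈ ℝ^{m×n}, the following are equivalent: (1) there exists x ∈ ℝⁿ with A·x < 0 componentwise; (2) there is no y ∈ ℝᵐ with Aᵀ·y = 0, y ≥ 0 componentwise, and y ≠ 0. -/
theorem stmt_9 (m n : ℕ) (A : Matrix (Fin m) (Fin n) ℝ) :
    (∃ x : Fin n → ℝ, ∀ i, A.mulVec x i < 0) ↔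
    ¬ ∃ y : Fin m → ℝ, A.transpose.mulVec y = 0 ∧ (∀ i, 0 ≤ y i) ∧ y ≠ 0 := by
  constructor
  · rintro ⟨x, hx⟩ ⟨y, hy0, hynn, hyne⟩
    rw [Matrix.mulVec_transpose] at hy0
    have hdot : dotProduct y (A.mulVec x) = 0 := by
      rw [Matrix.dotProduct_mulVec, hy0, zero_dotProduct]
    obtain ⟨i₀, hi₀⟩ : ∃ i, y i ≠ 0 := Function.ne_iff.mp hyne
    have hi₀' : 0 < y i₀ := lt_of_le_of_ne (hynn i₀) (Ne.symm hi₀)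
    have : dotProduct y (A.mulVec x) < 0 := by
      have h := Finset.sum_lt_sum (s := Finset.univ) (f := fun i => y i * A.mulVec x i)
        (g := fun _ => (0 : ℝ))
        (fun i _ => mul_nonpos_of_nonneg_of_nonpos (hynn i) (hx i).le)
        ⟨i₀, Finset.mem_univ _, mul_neg_of_pos_of_neg hi₀' (hx i₀)⟩
      simpa [dotProduct] using h
    linarith [hdot, this]
  · intro h
    by_contra hx
    apply h
    set a : Fin m → (Fin n → ℝ) := fun i => A i with ha
    have h0 : (0 : Fin n → ℝ) ∈ convexHull ℝ (Set.range a) := by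
      by_contra h0
      obtain ⟨f, u, hfu, hu0⟩ := geometric_hahn_banach_closed_point
        (convex_convexHull ℝ _) ((Set.finite_range a).isClosed_convexHull ℝ) h0
      rw [map_zero] at hu0
      refine hx ⟨fun j => f (fun k => if j = k then 1 else 0), fun i => ?_⟩
      have : A.mulVec (fun j => f (fun k => if j = k then 1 else 0)) i = f (a i) := by
        have hf := LinearMap.pi_apply_eq_sum_univ (f : (Fin n → ℝ) →ₗ[ℝ] ℝ) (a i)
        rw [ContinuousLinearMap.coe_coe] at hf
        rw [hf]
        simp [Matrix.mulVec, dotProduct, smul_eq_mul, ha]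
      rw [this]
      exact lt_trans (hfu _ (subset_convexHull ℝ _ (Set.mem_range_self i))) hu0
    rw [convexHull_range_eq_exists_affineCombination] at h0
    obtain ⟨s, w, hw0, hw1, hwa⟩ := h0
    rw [Finset.affineCombination_eq_linear_combination s a w hw1] at hwa
    refine ⟨fun i => if i ∈ s then w i else 0, ?_, ?_, ?_⟩
    · rw [Matrix.mulVec_transpose]
      funext j
      have := congrFun hwa j
      simp only [Finset.sum_apply, Pi.smul_apply, smul_eq_mul, Pi.zero_apply] at this
      simp only [Matrix.vecMul, dotProduct, Pi.zero_apply, ite_mul, zero_mul]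
      rw [Finset.sum_ite_mem, Finset.univ_inter]
      simpa [ha] using this
    · intro i
      by_cases hi : i ∈ s
      · simp [hi, hw0 i hi]
      · simp [hi]
    · intro hc
      have : ∑ i ∈ s, w i = 0 := by
        refine Finset.sum_eq_zero fun i hi => ?_
        have := congrFun hc i
        simpa [hi] using this
      rw [hw1] at this
      exact one_ne_zero this
end

section
/- Let a, b : ℕ → ℝ be sequences, 0 < h < k, λ > 0, with b_i = λ·a_i for all 0 < i < k, a_h ≠ 0 and b_k ≠ λ·a_k. Then (a_h − a_k)(b_{h+1} − b_{k−1}) ≠ (a_{h+1} − a_{k−1})(b_h − b_k) if and only if a_{h+1} ≠ a_{k−1} and h + 1 < k. -/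
/-- The cross difference factors as `(q - s) * (t - l * r)`. -/
theorem cross_sub_ne_iff_of_ne_mul {R : Type*} [CommRing R] [NoZeroDivisors R]
    {l p q r s t : R} (ht : t ≠ l * r) :
    (p - r) * (l * q - l * s) ≠ (q - s) * (l * p - t) ↔ q ≠ s := by
  rw [ne_eq, ← sub_eq_zero,
    show (p - r) * (l * q - l * s) - (q - s) * (l * p - t) = (q - s) * (t - l * r) by ring,
    mul_eq_zero, sub_eq_zero, sub_eq_zero, or_iff_left ht]

theorem stmt_13_general (a b : ℕ → ℝ)
    (h k : ℕ) (hh : 0 < h) (hhk : h < k) (l : ℝ)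
    (hprop : ∀ i, 0 < i → i < k → b i = l * a i)
    (hbk : b k ≠ l * a k) :
    (a h - a k) * (b (h + 1) - b (k - 1)) ≠ (a (h + 1) - a (k - 1)) * (b h - b k) ↔
    (a (h + 1) ≠ a (k - 1) ∧ h + 1 < k) := by
  rcases (show h + 1 ≤ k from hhk).eq_or_lt with rfl | hk
  · simp only [Nat.add_sub_cancel, lt_irrefl, and_false, iff_false, not_not]
    ring
  · rw [hprop h hh hhk, hprop (h + 1) (by omega) hk, hprop (k - 1) (by omega) (by omega),
      cross_sub_ne_iff_of_ne_mul hbk, and_iff_left hk]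

theorem stmt_13 (a b : ℕ → ℝ)
    (h k : ℕ) (hh : 0 < h) (hhk : h < k) (l : ℝ) (hl : 0 < l)
    (hprop : ∀ i, 0 < i → i < k → b i = l * a i)
    (hah : a h ≠ 0) (hbk : b k ≠ l * a k) :
    (a h - a k) * (b (h + 1) - b (k - 1)) ≠ (a (h + 1) - a (k - 1)) * (b h - b k) ↔
    (a (h + 1) ≠ a (k - 1) ∧ h + 1 < k) :=
  stmt_13_general a b h k hh hhk l hprop hbk
end

section
/- Suppose a_1 > 0 and consider the chain of inequalities: a_1 > a_{n−1}, a_1 > a_{n−2}, and for each i with 0 ≤ i ≤ n−4, a_1 + ∑_{j=i+2}^{n−2} a_j > (n−i−2)·a_{i+1}. Then these inequalities are jointly unsatisfiable by any real sequence (a_i), for n ≥ 4. -/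
/-!
Write `q = n - 2`. The hypotheses say that, for every `1 ≤ k ≤ q`, the value `a k` is beaten by
the average of `a 1` and the values `a j` with `k < j ≤ q` (for `k = q` this is `a 1 > a (n - 2)`,
and for `k < q` it is the inequality with `i = k - 1`). Going down from `k = q`, every such
average is at most `a 1`, so `a k < a 1` for all `1 ≤ k ≤ q`; at `k = 1` this reads `a 1 < a 1`.
-/

open Finset

section

variable {K : Type*} [CommRing K] [LinearOrder K] [IsStrictOrderedRing K]

theorem lt_of_card_add_one_mul_lt_add_sum {ι : Type*} {s : Finset ι} {f : ι → K} {c x : K}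
    (hf : ∀ j ∈ s, f j ≤ c) (hx : (#s + 1 : K) * x < c + ∑ j ∈ s, f j) : x < c := by
  have hsum : ∑ j ∈ s, f j ≤ #s * c := by
    simpa only [nsmul_eq_mul] using sum_le_card_nsmul s f c hf
  refine lt_of_mul_lt_mul_left (a := (#s + 1 : K)) ?_ (by positivity)
  linarith

theorem forall_lt_of_mul_lt_add_sum_Icc {a : ℕ → K} {c : K} {p q : ℕ}
    (h : ∀ k ∈ Icc p q, ((q - k + 1 : ℕ) : K) * a k < c + ∑ j ∈ Icc (k + 1) q, a j) :
    ∀ k ∈ Icc p q, a k < c := by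
  intro k hk
  induction hd : q - k using Nat.strong_induction_on generalizing k with
  | _ d ih =>
    have hlater : ∀ j ∈ Icc (k + 1) q, a j ≤ c := fun j hj => by
      simp only [mem_Icc] at hk hj
      exact (ih (q - j) (by omega) j (mem_Icc.2 ⟨by omega, hj.2⟩) rfl).le
    refine lt_of_card_add_one_mul_lt_add_sum hlater ?_
    rw [Nat.card_Icc, show q + 1 - (k + 1) = q - k by omega]
    exact_mod_cast h k hk

end

theorem stmt_16 (n : ℕ) (hn : 4 ≤ n) :
    ¬ ∃ a : ℕ → ℝ,
      0 < a 1 ∧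
      a 1 > a (n - 1) ∧
      a 1 > a (n - 2) ∧
      (∀ i : ℕ, i ≤ n - 4 →
        a 1 + ∑ j ∈ Finset.Icc (i + 2) (n - 2), a j > ((n : ℝ) - i - 2) * a (i + 1)) := by
  rintro ⟨a, -, -, hlast, hchain⟩
  have hk : ∀ k ∈ Icc 1 (n - 2),
      ((n - 2 - k + 1 : ℕ) : ℝ) * a k < a 1 + ∑ j ∈ Icc (k + 1) (n - 2), a j := by
    intro k hk
    rw [mem_Icc] at hk
    rcases hk.2.eq_or_lt with rfl | hlt
    · simpa using hlast
    · have hi := hchain (k - 1) (by omega)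
      rw [show k - 1 + 2 = k + 1 by omega, show k - 1 + 1 = k by omega] at hi
      convert hi using 2
      rw [show n - 2 - k + 1 = n - (k + 1) by omega, Nat.cast_sub (by omega), Nat.cast_sub hk.1]
      push_cast
      ring
  exact lt_irrefl _ (forall_lt_of_mul_lt_add_sum_Icc hk 1 (mem_Icc.2 ⟨le_rfl, by omega⟩))
end
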